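/- arXiv:2305.18134 — 2 statements merged into one kernel-verified Lean document; each statement's English description precedes it below -/
import Mathlib

section
/- Let h(ξ) = 1 + (3ξ⁴ − 2ξ² + 3)·arctan ξ/(ξ(ξ² − 1)) for ξ ∈ (1, ∞). Then lim_{ξ→1⁺} h(ξ) = +∞ and lim_{ξ→+∞} h(ξ) = +∞, and h is bounded below on (1, ∞) by some constant α* > 1. -/
open Filter Set

theorem stmt_9 (h : ℝ → ℝ)
    (hh : h = fun ξ => 1 + (3 * ξ ^ 4 - 2 * ξ ^ 2 + 3) * Real.arctan ξ / (ξ * (ξ ^ 2 - 1))) :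
    Tendsto h (nhdsWithin 1 (Ioi 1)) atTop ∧
    Tendsto h atTop atTop ∧
    ∃ αstar : ℝ, 1 < αstar ∧ ∀ ξ : ℝ, 1 < ξ → αstar ≤ h ξ := by
  have key : ∀ ξ : ℝ, 1 < ξ → 1 + ξ ≤ h ξ := by
    intro ξ hξ
    have hD : 0 < ξ * (ξ ^ 2 - 1) := by nlinarith
    have ha : (3:ℝ)/4 ≤ Real.arctan ξ := by
      have h1 : Real.arctan 1 ≤ Real.arctan ξ := Real.arctan_strictMono.monotone hξ.le
      rw [Real.arctan_one] at h1
      nlinarith [Real.pi_gt_three]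
    have hc : (0:ℝ) ≤ 3 * ξ ^ 4 - 2 * ξ ^ 2 + 3 := by nlinarith
    have hN : ξ * (ξ * (ξ ^ 2 - 1)) ≤ (3 * ξ ^ 4 - 2 * ξ ^ 2 + 3) * Real.arctan ξ := by
      nlinarith [mul_le_mul_of_nonneg_left ha hc]
    rw [hh]
    simp only
    have := (le_div_iff₀ hD).mpr hN
    linarith
  refine ⟨?_, ?_, 2, one_lt_two, fun ξ hξ => by linarith [key ξ hξ]⟩
  · -- ξ → 1⁺
    have hD : Tendsto (fun ξ : ℝ => ξ * (ξ ^ 2 - 1)) (nhdsWithin 1 (Ioi 1)) (nhdsWithin 0 (Ioi 0)) := by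
      rw [tendsto_nhdsWithin_iff]
      constructor
      · have : Tendsto (fun ξ : ℝ => ξ * (ξ ^ 2 - 1)) (nhds 1) (nhds (1 * (1 ^ 2 - 1))) := by
          exact (continuous_id.mul ((continuous_pow 2).sub continuous_const)).tendsto 1
        simpa using this.mono_left nhdsWithin_le_nhds
      · filter_upwards [self_mem_nhdsWithin] with ξ (hξ : 1 < ξ)
        have : 0 < ξ * (ξ ^ 2 - 1) := by nlinarith
        exact this
    have hDi : Tendsto (fun ξ : ℝ => (ξ * (ξ ^ 2 - 1))⁻¹) (nhdsWithin 1 (Ioi 1)) atTop :=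
      hD.inv_tendsto_nhdsGT_zero
    have hN : Tendsto (fun ξ : ℝ => (3 * ξ ^ 4 - 2 * ξ ^ 2 + 3) * Real.arctan ξ)
        (nhdsWithin 1 (Ioi 1)) (nhds Real.pi) := by
      have : Tendsto (fun ξ : ℝ => (3 * ξ ^ 4 - 2 * ξ ^ 2 + 3) * Real.arctan ξ) (nhds 1)
          (nhds ((3 * 1 ^ 4 - 2 * 1 ^ 2 + 3) * Real.arctan 1)) := by
        exact (Continuous.tendsto (by continuity) 1)
      have h2 : ((3:ℝ) * 1 ^ 4 - 2 * 1 ^ 2 + 3) * Real.arctan 1 = Real.pi := by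
        rw [Real.arctan_one]; ring
      rw [h2] at this
      exact this.mono_left nhdsWithin_le_nhds
    have hmul := hN.pos_mul_atTop Real.pi_pos hDi
    have := tendsto_atTop_add_const_left _ 1 hmul
    rw [hh]
    refine this.congr fun ξ => ?_
    simp [div_eq_mul_inv]
  · -- ξ → ∞
    have hb : Tendsto (fun ξ : ℝ => 1 + ξ) atTop atTop :=
      tendsto_atTop_add_const_left _ 1 tendsto_id
    refine tendsto_atTop_mono' atTop ?_ hb
    filter_upwards [eventually_gt_atTop 1] with ξ hξ
    exact key ξ hξ
end

section
/- For the sphere circular orbit with α > 0 and ξ₀ > 1, let f₃(ξ)² = ((3ξ⁴ − 2ξ² + 3)·arctan ξ + (α − 1)ξ(1 − ξ²))/(arctan ξ·(1 + ξ²)²). Then f₃(ξ)² ≤ 4 holds for all ξ > 1 and α > 0, i.e., (3ξ⁴ − 2ξ² + 3)·arctan ξ + (α − 1)ξ(1 − ξ²) ≤ 4·arctan ξ·(1 + ξ²)² whenever ξ > 1 and α > 0. -/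
theorem stmt_12 (ξ α : ℝ) (hξ : 1 < ξ) (hα : 0 < α) :
    (3 * ξ ^ 4 - 2 * ξ ^ 2 + 3) * Real.arctan ξ + (α - 1) * ξ * (1 - ξ ^ 2) ≤
      4 * (1 + ξ ^ 2) ^ 2 * Real.arctan ξ := by
  have h1 : Real.pi / 4 ≤ Real.arctan ξ := by
    rw [show Real.pi / 4 = Real.arctan 1 by rw [Real.arctan_one]]
    exact (Real.arctan_strictMono hξ).le
  have hpi : 3 < Real.pi := Real.pi_gt_three
  have hx : (0:ℝ) < ξ - 1 := by linarith
  nlinarith [mul_pos hα (mul_pos (lt_trans one_pos hξ) (by nlinarith : (0:ℝ) < ξ ^ 2 - 1)),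
    mul_le_mul_of_nonneg_left h1 (by positivity : (0:ℝ) ≤ ξ ^ 4 + 10 * ξ ^ 2 + 1),
    sq_nonneg ξ, sq_nonneg (ξ - 1), sq_nonneg (ξ ^ 2 - ξ), mul_pos hx hx]
end
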